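/- The NADS (Σ, g_{1,∞}) is sensitive: there exists ε > 0 such that for every x ∈ Σ and every δ > 0 there exist y ∈ Σ with d(x,y) < δ and n ≥ 0 with d(g_1^{(n)}(x), g_1^{(n)}(y)) ≥ ε. -/
import Mathlib


/-- The symbolic space `Σ = {0,1}^ℕ`; here `x : BinSeq` is 0-indexed, so `x n`
represents the symbol `x_{n+1}` of the paper. -/
abbrev BinSeq : Type := ℕ → Bool

/-- The shift map `σ(x₁x₂x₃⋯) = x₂x₃⋯`. -/
def shift (x : BinSeq) : BinSeq := fun n => x (n + 1)

/-- The metric `d(x,y) = Σ_{n≥1} |x_n − y_n| / 2^n` on `Σ` (with our 0-indexing, symbol `n`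
contributes `1/2^{n+1}`). -/
noncomputable def dS (x y : BinSeq) : ℝ :=
  ∑' n : ℕ, (if x n = y n then (0 : ℝ) else 1) / 2 ^ (n + 1)

/-- `tm n` is the Thue–Morse symbol `ξ_{n+1}`: the parity of the number of ones in the
binary expansion of `n` (i.e. of `(n+1) − 1`); `true` encodes `1` and `false` encodes `0`. -/
def tm (n : ℕ) : Bool := (Nat.digits 2 n).sum % 2 == 1

/-- `g i` is the map `g_{i+1}` of the NADS: `σ` if `ξ_{i+1} = 0` and `σ²` if `ξ_{i+1} = 1`. -/
def g (i : ℕ) : BinSeq → BinSeq := if tm i then shift ∘ shift else shift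

/-- `gComp n = g_1^{(n)} = g_n ∘ g_{n-1} ∘ ⋯ ∘ g_1`. -/
def gComp : ℕ → BinSeq → BinSeq
  | 0 => id
  | n + 1 => g n ∘ gComp n

/-- A set `U ⊆ Σ` is open for the metric `d`. -/
def IsOpenS (U : Set BinSeq) : Prop :=
  ∀ x ∈ U, ∃ ε : ℝ, 0 < ε ∧ ∀ y : BinSeq, dS x y < ε → y ∈ U

/-- `x` is a periodic point of the NADS `g_{1,∞}`: there is `n ≥ 1` with
`g_1^{(nk)}(x) = x` for all `k ≥ 0`. -/
def IsGPeriodicPt (x : BinSeq) : Prop :=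
  ∃ n : ℕ, 1 ≤ n ∧ ∀ k : ℕ, gComp (n * k) x = x

/-- The orbit `orb(x, g_{1,∞}) = {g_1^{(n)}(x) : n ≥ 0}`. -/
def gOrbit (x : BinSeq) : Set BinSeq :=
  Set.range fun n : ℕ => gComp n x

/-- Total shift count after `n` steps. -/
def mshift : ℕ → ℕ
  | 0 => 0
  | n + 1 => mshift n + (if tm n then 2 else 1)

lemma le_mshift (n : ℕ) : n ≤ mshift n := by
  induction n with
  | zero => simp [mshift]
  | succ n ih =>
    simp only [mshift]
    split <;> omega

lemma gComp_apply (n : ℕ) (x : BinSeq) (k : ℕ) :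
    gComp n x k = x (k + mshift n) := by
  induction n generalizing k with
  | zero => simp [gComp, mshift]
  | succ n ih =>
    simp only [gComp, Function.comp_apply, g, mshift]
    split <;> simp [shift, ih] <;> ring_nf

lemma dS_single (x y : BinSeq) (j : ℕ) (hj : x j ≠ y j)
    (h : ∀ k, k ≠ j → x k = y k) : dS x y = 1 / 2 ^ (j + 1) := by
  unfold dS
  rw [tsum_eq_single j]
  · simp [hj]
  · intro k hk
    simp [h k hk]

/-- The NADS `(Σ, g_{1,∞})` is sensitive. -/
theorem gNads_sensitive :
    ∃ ε : ℝ, 0 < ε ∧ ∀ x : BinSeq, ∀ δ : ℝ, 0 < δ →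
      ∃ y : BinSeq, ∃ n : ℕ, dS x y < δ ∧ ε ≤ dS (gComp n x) (gComp n y) := by
  refine ⟨1/2, by norm_num, fun x δ hδ => ?_⟩
  obtain ⟨N, hN⟩ := exists_pow_lt_of_lt_one hδ (by norm_num : (1:ℝ)/2 < 1)
  set j := mshift N with hjdef
  refine ⟨Function.update x j (!x j), N, ?_, ?_⟩
  · rw [dS_single x _ j (by cases x j <;> simp)
      (fun k hk => by simp [Function.update_of_ne hk])]
    calc (1:ℝ) / 2 ^ (j + 1) ≤ (1/2) ^ N := by
          rw [div_pow, one_pow]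
          apply div_le_div_of_nonneg_left (by norm_num) (by positivity)
          apply pow_le_pow_right₀ (by norm_num)
          have := le_mshift N; omega
      _ < δ := hN
  · have hd : dS (gComp N x) (gComp N (Function.update x j (!x j))) = 1 / 2 ^ (0 + 1) := by
      apply dS_single
      · rw [gComp_apply, gComp_apply, Nat.zero_add, ← hjdef, Function.update_self]
        cases x j <;> simp
      · intro k hk
        simp only [gComp_apply]
        rw [Function.update_of_ne (by omega)]
    rw [hd]; norm_num
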